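/- If x : ℝ → ℝ is three times continuously differentiable with bounded third derivative, then (6x(t+τ) - 3x(t) - 2x(t-τ) - x(t-2τ))/(10τ) approximates ẋ(t) with truncation error O(τ²). -/

import Mathlib

/-!
Write `R(h)` for the remainder of the second-order Taylor expansion of `x` at `t`, evaluated at
`t + h`; Lagrange's form gives `|R(h)| ≤ M |h|³ / 6`. The weights `6, -3, -2, -1` annihilate the
constant and second-order Taylor terms and produce `10 τ ẋ(t)` from the first-order ones, so the
truncation error is `(6 R(τ) - 2 R(-τ) - R(-2τ)) / (10 τ)`, of size at most
`(6 + 2 + 8) M τ³ / (60 τ) = 4 M τ² / 15`.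
-/

open Set Finset Nat

theorem taylorWithinEval_eq_sum_iteratedDeriv {f : ℝ → ℝ} {n : ℕ} {s : Set ℝ} {x₀ : ℝ}
    (hf : ContDiffAt ℝ n f x₀) (hs : UniqueDiffOn ℝ s) (hx₀ : x₀ ∈ s) (x : ℝ) :
    taylorWithinEval f n s x₀ x =
      ∑ k ∈ range (n + 1), iteratedDeriv k f x₀ * (x - x₀) ^ k / k ! := by
  rw [taylor_within_apply]
  refine sum_congr rfl fun k hk => ?_
  rw [iteratedDerivWithin_eq_iteratedDeriv hs (hf.of_le (mod_cast mem_range_succ_iff.mp hk)) hx₀,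
    smul_eq_mul]
  ring

theorem abs_sub_taylor_sum_le {f : ℝ → ℝ} {n : ℕ} {x₀ x M : ℝ} (hf : ContDiff ℝ (n + 1) f)
    (hM : ∀ y ∈ uIcc x₀ x, |iteratedDeriv (n + 1) f y| ≤ M) :
    |f x - ∑ k ∈ range (n + 1), iteratedDeriv k f x₀ * (x - x₀) ^ k / k !| ≤
      M * |x - x₀| ^ (n + 1) / (n + 1)! := by
  rcases eq_or_ne x₀ x with rfl | hne
  · simp [sum_range_succ']
  obtain ⟨y, hy, hrem⟩ := taylor_mean_remainder_lagrange_iteratedDeriv hne hf.contDiffOn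
  rw [← taylorWithinEval_eq_sum_iteratedDeriv (hf.contDiffAt.of_le (by norm_cast; omega))
    (uniqueDiffOn_uIcc hne) left_mem_uIcc, hrem, abs_div, abs_mul, abs_pow, Nat.abs_cast]
  gcongr
  exact hM y (Ioo_subset_Icc_self hy)

noncomputable def secondOrderTaylorRemainder (x : ℝ → ℝ) (t h : ℝ) : ℝ :=
  x (t + h) - (x t + deriv x t * h + iteratedDeriv 2 x t * h ^ 2 / 2)

theorem abs_secondOrderTaylorRemainder_le {x : ℝ → ℝ} {t h M : ℝ} (hx : ContDiff ℝ 3 x)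
    (hM : ∀ s ∈ uIcc t (t + h), |iteratedDeriv 3 x s| ≤ M) :
    |secondOrderTaylorRemainder x t h| ≤ M * |h| ^ 3 / 6 := by
  simpa [secondOrderTaylorRemainder, sum_range_succ, iteratedDeriv_one, Nat.factorial] using
    abs_sub_taylor_sum_le (n := 2) hx hM

theorem four_instant_difference_sub_deriv_eq (x : ℝ → ℝ) (t : ℝ) {τ : ℝ} (hτ : τ ≠ 0) :
    (6 * x (t + τ) - 3 * x t - 2 * x (t - τ) - x (t - 2 * τ)) / (10 * τ) - deriv x t =
      (6 * secondOrderTaylorRemainder x t τ - 2 * secondOrderTaylorRemainder x t (-τ) -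
        secondOrderTaylorRemainder x t (-(2 * τ))) / (10 * τ) := by
  simp only [secondOrderTaylorRemainder, ← sub_eq_add_neg]
  field_simp
  ring

theorem second_four_instant_formula_truncation_error :
    ∃ C : ℝ, 0 < C ∧ ∀ (x : ℝ → ℝ) (t τ M : ℝ), ContDiff ℝ 3 x → 0 < τ →
      (∀ s ∈ Set.Icc (t - 2 * τ) (t + τ), |iteratedDeriv 3 x s| ≤ M) →
      |(6 * x (t + τ) - 3 * x t - 2 * x (t - τ) - x (t - 2 * τ)) / (10 * τ) -
          deriv x t| ≤ C * M * τ ^ 2 := by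
  refine ⟨4 / 15, by norm_num, fun x t τ M hx hτ hM => ?_⟩
  have hR {h : ℝ} (hlo : -(2 * τ) ≤ h) (hhi : h ≤ τ) :
      |secondOrderTaylorRemainder x t h| ≤ M * |h| ^ 3 / 6 :=
    abs_secondOrderTaylorRemainder_le hx fun s hs => hM s <|
      uIcc_subset_Icc ⟨by linarith, by linarith⟩ ⟨by linarith, by linarith⟩ hs
  have h₁ := hR (h := τ) (by linarith) le_rfl
  have h₂ := hR (h := -τ) (by linarith) (by linarith)
  have h₃ := hR (h := -(2 * τ)) le_rfl (by linarith)
  simp only [abs_neg, abs_mul, abs_two, abs_of_pos hτ, abs_le] at h₁ h₂ h₃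
  rw [four_instant_difference_sub_deriv_eq x t hτ.ne', abs_div,
    abs_of_pos (by positivity : (0 : ℝ) < 10 * τ), div_le_iff₀ (by positivity), abs_le]
  constructor <;> linarith
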